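/- arXiv:2603.03858 — 6 statements merged into one kernel-verified Lean document; each statement's English description precedes it below -/
import Mathlib

section
/- Let (R, m, k) be a Noetherian local ring with m^2 generated by at most 2 elements, and suppose m^3 ≠ 0. If x ∈ m \ m^2 satisfies m^2 = x·m, then x^2 ∉ m^3. -/
/-!
From `m² = x·m` one gets `m³ = x²·m`. So if `x² ∈ m³`, then `x² = x² y` with `y ∈ m`, and
Nakayama's lemma forces `x² = 0`, whence `m³ = x²·m = 0`.
-/

open IsLocalRing

theorem Ideal.pow_succ_eq_span_pow_mul_of_sq_eq {R : Type*} [CommSemiring R] {I : Ideal R}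
    {x : R} (h : I ^ 2 = Ideal.span {x} * I) (n : ℕ) :
    I ^ (n + 1) = Ideal.span {x ^ n} * I := by
  induction n with
  | zero => simp
  | succ n ih =>
    calc I ^ (n + 1 + 1) = Ideal.span {x ^ n} * I ^ 2 := by rw [pow_succ, ih, mul_assoc, sq]
      _ = Ideal.span {x ^ (n + 1)} * I := by
        rw [h, ← mul_assoc, Ideal.span_singleton_mul_span_singleton, pow_succ]

theorem Ideal.eq_zero_of_mem_span_singleton_mul_of_le_jacobson {R : Type*} [CommRing R]
    {I : Ideal R} (hI : I ≤ (⊥ : Ideal R).jacobson) {a : R} (ha : a ∈ Ideal.span {a} * I) :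
    a = 0 := by
  have hspan : Ideal.span {a} ≤ I • Ideal.span {a} := by
    rw [Ideal.span_singleton_le_iff_mem, Ideal.smul_eq_mul, mul_comm]
    exact ha
  simpa using Submodule.eq_bot_of_le_smul_of_le_jacobson_bot I _
    (Submodule.fg_span_singleton a) hspan hI

theorem stmt1_general {R : Type*} [CommRing R] [IsLocalRing R]
    (h3 : (maximalIdeal R) ^ 3 ≠ ⊥)
    (x : R)
    (hxm : (maximalIdeal R) ^ 2 = Ideal.span {x} * maximalIdeal R) :
    x ^ 2 ∉ (maximalIdeal R) ^ 3 := by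
  have hcube : maximalIdeal R ^ 3 = Ideal.span {x ^ 2} * maximalIdeal R :=
    Ideal.pow_succ_eq_span_pow_mul_of_sq_eq hxm 2
  intro hmem
  rw [hcube] at hmem
  have hsq : x ^ 2 = 0 :=
    Ideal.eq_zero_of_mem_span_singleton_mul_of_le_jacobson (maximalIdeal_le_jacobson ⊥) hmem
  apply h3
  rw [hcube, hsq, Ideal.span_singleton_eq_bot.mpr rfl, Ideal.bot_mul]

/-- If `(R, m, k)` is a Noetherian local ring with `m^2` generated by at most 2
elements and `m^3 ≠ 0`, and `x ∈ m \ m^2` satisfies `m^2 = x·m`, then `x^2 ∉ m^3`. -/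
theorem stmt1 {R : Type*} [CommRing R] [IsNoetherianRing R] [IsLocalRing R]
    (hgen : ∃ s : Finset R, s.card ≤ 2 ∧ Ideal.span (s : Set R) = (maximalIdeal R) ^ 2)
    (h3 : (maximalIdeal R) ^ 3 ≠ ⊥)
    (x : R) (hx : x ∈ maximalIdeal R) (hx2 : x ∉ (maximalIdeal R) ^ 2)
    (hxm : (maximalIdeal R) ^ 2 = Ideal.span {x} * maximalIdeal R) :
    x ^ 2 ∉ (maximalIdeal R) ^ 3 :=
  stmt1_general h3 x hxm
end

section
/- Let (R, m, k) be an Artinian local ring with m^3 = 0 and dim_k(m^2) = 2. Then there exists x ∈ m \ m^2 such that m^2 = x·m. -/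
/-!
Since `m · m² = 0`, the ideal `m²` is a vector space over `k = R/m` of dimension at most two,
and it is not principal. So if no `x·m` were all of `m²`, every `x·m` would lie on the line
through any of its nonzero elements. Choosing `x y` and `x' y'` in `m` with `xy` and `x'y'`
independent, the products `xy'` and `x'y` then lie on both lines, hence vanish, and `(x + x')·m`
contains both `xy` and `x'y'`, a contradiction.
-/

open IsLocalRing

/-- `mu I` is the minimal number of generators of the ideal `I`. -/
noncomputable def mu {R : Type*} [CommRing R] (I : Ideal R) : ℕ :=
  sInf {n | ∃ s : Finset R, s.card = n ∧ Ideal.span (s : Set R) = I}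

open Module Submodule

theorem Submodule.span_pair_eq_top_of_notMem_span_singleton {K V : Type*} [DivisionRing K]
    [AddCommGroup V] [Module K V] {a b u w : V} (hab : span K {a, b} = ⊤) (hw : w ≠ 0)
    (hu : u ∉ K ∙ w) : span K {u, w} = ⊤ := by
  have hind : LinearIndependent K ![u, w] :=
    linearIndependent_fin2.2 ⟨hw, fun c hc => hu (mem_span_singleton.2 ⟨c, hc⟩)⟩
  rw [← Matrix.range_cons_cons_empty _ _ ![]] at hab ⊢
  have : FiniteDimensional K V := ⟨fg_def.2 ⟨_, Set.finite_range _, hab⟩⟩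
  have h2 := finrank_le_of_span_eq_top hab
  have h2' := hind.fintype_card_le_finrank
  exact hind.span_eq_top_of_card_eq_finrank' (by simp at h2 h2' ⊢; omega)

theorem Module.IsTorsionBySet.span_pair_eq_top_of_notMem_span_singleton {R M : Type*}
    [CommRing R] [AddCommGroup M] [Module R M] {m : Ideal R} [m.IsMaximal]
    (hM : IsTorsionBySet R M m) {a b u w : M} (hab : span R {a, b} = ⊤) (hw : w ≠ 0)
    (hu : u ∉ R ∙ w) : span R {u, w} = ⊤ := by
  let _ := Ideal.Quotient.field m
  let _ := hM.module
  have := hM.isScalarTower (S := R)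
  have hspan (s : Set M) : span R s = (span (R ⧸ m) s).restrictScalars R :=
    (restrictScalars_span R (R ⧸ m) Ideal.Quotient.mk_surjective s).symm
  rw [hspan, restrictScalars_eq_top_iff] at hab ⊢
  rw [hspan, restrictScalars_mem] at hu
  exact Submodule.span_pair_eq_top_of_notMem_span_singleton hab hw hu

theorem Ideal.span_pair_eq_of_notMem_span_singleton {R : Type*} [CommRing R] {m I : Ideal R}
    [m.IsMaximal] (hmI : m * I = ⊥) {a b u w : R} (hab : span {a, b} = I) (hu : u ∈ I)
    (hw : w ∈ I) (hw0 : w ≠ 0) (huw : u ∉ span {w}) : span {u, w} = I := by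
  have hM : Module.IsTorsionBySet R I m := fun x r =>
    Subtype.ext (by simpa [hmI] using mul_mem_mul r.2 x.2)
  have ha : a ∈ I := hab ▸ subset_span (by simp)
  have hb : b ∈ I := hab ▸ subset_span (by simp)
  have hpair {x y : R} (hx : x ∈ I) (hy : y ∈ I) (z : I) :
      (z : R) ∈ span {x, y} ↔ z ∈ Submodule.span R {(⟨x, hx⟩ : I), ⟨y, hy⟩} := by
    simp [mem_span_pair, Submodule.mem_span_pair, Subtype.ext_iff]
  have hab' : Submodule.span R {(⟨a, ha⟩ : I), ⟨b, hb⟩} = ⊤ :=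
    eq_top_iff.2 fun z _ => (hpair ha hb z).1 (hab ▸ z.2)
  have huw' : (⟨u, hu⟩ : I) ∉ R ∙ ⟨w, hw⟩ := by
    simpa [Submodule.mem_span_singleton, mem_span_singleton', Subtype.ext_iff] using huw
  have htop := hM.span_pair_eq_top_of_notMem_span_singleton hab' (by simpa using hw0) huw'
  refine le_antisymm (span_le.2 (by simp [Set.insert_subset_iff, hu, hw])) fun z hz => ?_
  exact (hpair hu hw ⟨z, hz⟩).2 (htop ▸ mem_top)

namespace Ideal

variable {R : Type*} [CommRing R] {m I J : Ideal R} [m.IsMaximal] {a b : R}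

theorem le_span_singleton_of_lt (hmI : m * I = ⊥) (hab : span {a, b} = I) (hJ : J < I) {w : R}
    (hw : w ∈ J) (hw0 : w ≠ 0) : J ≤ span {w} := by
  intro u hu
  by_contra huw
  refine hJ.ne (le_antisymm hJ.le ?_)
  rw [← span_pair_eq_of_notMem_span_singleton hmI hab (hJ.le hu) (hJ.le hw) hw0 huw]
  exact span_le.2 (by simp [Set.insert_subset_iff, hu, hw])

theorem mul_mem_span_singleton_mul (hm3 : m ^ 3 = ⊥) (hab : span {a, b} = m ^ 2) {c d e : R}
    (hc : c ∈ m) (hcm : span {c} * m ≠ m ^ 2) (hd : d ∈ m) (he : e ∈ m)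
    (hcd : c * d ≠ 0) : c * e ∈ span {c * d} := by
  have hmm : m * m ^ 2 = ⊥ := by rw [← pow_succ', hm3]
  have hlt : span {c} * m < m ^ 2 :=
    lt_of_le_of_ne (sq m ▸ mul_mono_left ((span_singleton_le_iff_mem m).2 hc)) hcm
  exact le_span_singleton_of_lt hmm hab hlt (mul_mem_mul (mem_span_singleton_self c) hd) hcd
    (mul_mem_mul (mem_span_singleton_self c) he)

theorem exists_span_singleton_mul_eq_sq (hm3 : m ^ 3 = ⊥) (hab : span {a, b} = m ^ 2)
    (hprin : ∀ w, span {w} ≠ m ^ 2) : ∃ x ∈ m, span {x} * m = m ^ 2 := by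
  by_contra! H
  have hline {c d e : R} (hc : c ∈ m) (hd : d ∈ m) (he : e ∈ m) (hcd : c * d ≠ 0) :
      c * e ∈ span {c * d} :=
    mul_mem_span_singleton_mul hm3 hab hc (H c hc) hd he hcd
  obtain ⟨x, hx, y, hy, hxy⟩ : ∃ x ∈ m, ∃ y ∈ m, x * y ≠ 0 := by
    by_contra! h
    refine hprin 0 (le_antisymm (by simp) ?_)
    rw [sq, span_singleton_zero]
    exact mul_le.2 fun r hr s hs => h r hr s hs ▸ zero_mem ⊥
  obtain ⟨x', hx', y', hy', hx'y'⟩ : ∃ x' ∈ m, ∃ y' ∈ m, x' * y' ∉ span {x * y} := by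
    by_contra! h
    refine hprin (x * y) (le_antisymm ?_ (sq m ▸ mul_le.2 h))
    exact (span_singleton_le_iff_mem _).2 (sq m ▸ mul_mem_mul hx hy)
  have hdisj {v : R} (hv : v ∈ span {x * y}) (hv' : v ∈ span {x' * y'}) : v = 0 := by
    by_contra hv0
    have hlt : span {x' * y'} < m ^ 2 := lt_of_le_of_ne
      ((span_singleton_le_iff_mem _).2 (sq m ▸ mul_mem_mul hx' hy')) (hprin _)
    refine hx'y' (span_singleton_le_iff_mem _ |>.1 ?_)
    exact (le_span_singleton_of_lt (by rw [← pow_succ', hm3]) hab hlt hv' hv0).trans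
      ((span_singleton_le_iff_mem _).2 hv)
  have hx'y'0 : x' * y' ≠ 0 := fun h => hx'y' (h ▸ zero_mem _)
  have hxy' : x * y' = 0 := hdisj (hline hx hy hy' hxy)
    (by simpa only [mul_comm] using hline hy' hx' hx (by rwa [mul_comm]))
  have hx'y : x' * y = 0 := hdisj
    (by simpa only [mul_comm] using hline hy hx hx' (by rwa [mul_comm])) (hline hx' hy' hy hx'y'0)
  have hsum := hline (add_mem hx hx') hy hy' (by rwa [add_mul, hx'y, add_zero])
  rw [add_mul, add_mul, hx'y, hxy', add_zero, zero_add] at hsum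
  exact hx'y' hsum

end Ideal

section MinimalGenerators

variable {R : Type*} [CommRing R] {I : Ideal R}

theorem mu_le_card {s : Finset R} (hs : Ideal.span s = I) : mu I ≤ s.card :=
  Nat.sInf_le ⟨s, rfl, hs⟩

theorem exists_finset_card_eq_mu (hI : mu I ≠ 0) :
    ∃ s : Finset R, s.card = mu I ∧ Ideal.span s = I :=
  Nat.sInf_mem (Nat.nonempty_of_pos_sInf (Nat.pos_of_ne_zero hI))

theorem exists_span_pair_eq_of_mu_eq_two (hI : mu I = 2) : ∃ a b : R, Ideal.span {a, b} = I := by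
  classical
  obtain ⟨s, hs, hspan⟩ := exists_finset_card_eq_mu (hI ▸ two_ne_zero)
  obtain ⟨a, b, -, rfl⟩ := Finset.card_eq_two.1 (hs.trans hI)
  exact ⟨a, b, by simpa using hspan⟩

theorem span_singleton_ne_of_one_lt_mu (hI : 1 < mu I) (w : R) : Ideal.span {w} ≠ I :=
  fun hw => hI.not_ge (mu_le_card (s := {w}) (by simpa using hw))

end MinimalGenerators

theorem stmt2_general {R : Type*} [CommRing R] [IsLocalRing R]
    (h3 : (maximalIdeal R) ^ 3 = ⊥)
    (hdim : mu ((maximalIdeal R) ^ 2) = 2) :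
    ∃ x ∈ maximalIdeal R, x ∉ (maximalIdeal R) ^ 2 ∧
      (maximalIdeal R) ^ 2 = Ideal.span {x} * maximalIdeal R := by
  obtain ⟨a, b, hab⟩ := exists_span_pair_eq_of_mu_eq_two hdim
  have hprin := span_singleton_ne_of_one_lt_mu (hdim ▸ one_lt_two)
  obtain ⟨x, hx, hxm⟩ := Ideal.exists_span_singleton_mul_eq_sq h3 hab hprin
  refine ⟨x, hx, fun hx2 => hprin 0 ?_, hxm.symm⟩
  rw [Ideal.span_singleton_zero, eq_comm, eq_bot_iff, ← hxm, ← h3, pow_succ]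
  exact Ideal.mul_mono_left ((Ideal.span_singleton_le_iff_mem _).2 hx2)

/-- If `(R, m, k)` is an Artinian local ring with `m^3 = 0` and `m^2` a
2-dimensional `k`-vector space (equivalently, minimally generated by 2 elements), then there
exists `x ∈ m \ m^2` such that `m^2 = x·m`. -/
theorem stmt2 {R : Type*} [CommRing R] [IsArtinianRing R] [IsLocalRing R]
    (h3 : (maximalIdeal R) ^ 3 = ⊥)
    (hdim : mu ((maximalIdeal R) ^ 2) = 2) :
    ∃ x ∈ maximalIdeal R, x ∉ (maximalIdeal R) ^ 2 ∧
      (maximalIdeal R) ^ 2 = Ideal.span {x} * maximalIdeal R :=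
  stmt2_general h3 hdim
end

section
/- Let (R, m, k) be an Artinian Gorenstein local ring of embedding dimension at least 2 and Loewy length s. Then for every integer i with 2 ≤ i ≤ s, the quotient ring R/m^i is not Gorenstein. -/
open IsLocalRing

/-!
A Gorenstein Artinian local ring satisfies double annihilation, `0 : (0 : I) = I`, by induction
along covers `I' ⋖ I`: as `m I ⊆ I'`, multiplication by elements of `I/I'` sends `(0 : I')` into
the simple socle, so `(0 : I')` is `(0 : I)` plus a single extra generator.

If `R/m^i` were Gorenstein, its socle `(m^i : m)/m^i` would be cyclic, so by Nakayama
`m^(i-1) = (x)` and `(m^i : m) = m^(i-1)`. Double annihilation turns the latter into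
`(0 : x) = m (0 : m^i) ⊆ m²`. For `a, b ∈ m` independent modulo `m²` and `g ∈ m^(i-2)`,
writing `a g = p x`, `b g = q x` gives `(q a - p b) x = 0`, so `p ∈ m`; hence `a x ∈ m² x` and
`a ∈ m²`, which is absurd. So `m` is principal, against `edim R ≥ 2`.
-/

section

variable {R : Type*} [CommRing R]

theorem Ideal.comap_annihilator_map_quotientMk (I J : Ideal R) :
    (J.map (Ideal.Quotient.mk I)).annihilator.comap (Ideal.Quotient.mk I) =
      I.colon (J : Set R) := by
  ext w
  simp only [Ideal.mem_comap, Submodule.mem_annihilator, Submodule.mem_colon, smul_eq_mul,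
    Ideal.mem_map_iff_of_surjective _ Ideal.Quotient.mk_surjective]
  constructor
  · intro h c hc
    rw [← Ideal.Quotient.eq_zero_iff_mem, map_mul]
    exact h _ ⟨c, hc, rfl⟩
  · rintro h _ ⟨c, hc, rfl⟩
    rw [← map_mul, Ideal.Quotient.eq_zero_iff_mem]
    exact h c hc

theorem Ideal.comap_quotientMk_span_singleton (I : Ideal R) (z : R) :
    (Ideal.span {Ideal.Quotient.mk I z}).comap (Ideal.Quotient.mk I) = Ideal.span {z} ⊔ I := by
  rw [← Set.image_singleton, ← Ideal.map_span,
    Ideal.comap_map_of_surjective _ Ideal.Quotient.mk_surjective, ← RingHom.ker_eq_comap_bot,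
    Ideal.mk_ker]

theorem Ideal.annihilator_mul (I J : Ideal R) :
    (J * I).annihilator = I.annihilator.colon (J : Set R) := by
  ext w
  simp only [Submodule.mem_annihilator, Submodule.mem_colon, smul_eq_mul]
  constructor
  · intro h c hc y hy
    rw [mul_assoc]
    exact h _ (Ideal.mul_mem_mul hc hy)
  · intro h y hy
    refine Submodule.mul_induction_on hy (fun c hc y hy => ?_) (fun y y' hy hy' => ?_)
    · rw [← mul_assoc]
      exact h c hc y hy
    · rw [mul_add, hy, hy', add_zero]

theorem Ideal.le_annihilator_annihilator (I : Ideal R) : I ≤ I.annihilator.annihilator :=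
  fun b hb => Submodule.mem_annihilator.mpr fun w hw => by
    rw [smul_eq_mul, mul_comm]
    exact Submodule.mem_annihilator.mp hw b hb

theorem Ideal.sup_span_singleton_eq_of_covBy {I' I : Ideal R} (h : I' ⋖ I) {a : R} (ha : a ∈ I)
    (ha' : a ∉ I') : I' ⊔ Ideal.span {a} = I :=
  (h.eq_or_eq le_sup_left (sup_le h.le ((Ideal.span_singleton_le_iff_mem I).mpr ha))).resolve_left
    fun e => ha' (e ▸ Submodule.mem_sup_right (Ideal.mem_span_singleton_self a))

namespace IsLocalRing

variable [IsLocalRing R]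

theorem le_of_le_sup_maximalIdeal_mul [IsNoetherianRing R] {N N' : Ideal R}
    (h : N' ≤ N ⊔ maximalIdeal R * N') : N' ≤ N :=
  Submodule.le_of_le_smul_of_le_jacobson_bot (IsNoetherian.noetherian N')
    (jacobson_eq_maximalIdeal ⊥ bot_ne_top).ge h

theorem maximalIdeal_mul_le_of_covBy [IsNoetherianRing R] {I' I : Ideal R} (h : I' ⋖ I) :
    maximalIdeal R * I ≤ I' := by
  refine Ideal.mul_le.mpr fun c hc y hy => by_contra fun hcy => hcy ?_
  have hI : I' ⊔ Ideal.span {c * y} = I :=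
    Ideal.sup_span_singleton_eq_of_covBy h (Ideal.mul_mem_left I c hy) hcy
  have hy' : Ideal.span {y} ≤ I' := le_of_le_sup_maximalIdeal_mul <|
    calc Ideal.span {y} ≤ I := (Ideal.span_singleton_le_iff_mem I).mpr hy
      _ = I' ⊔ Ideal.span {c * y} := hI.symm
      _ ≤ I' ⊔ maximalIdeal R * Ideal.span {y} :=
          sup_le_sup_left ((Ideal.span_singleton_le_iff_mem _).mpr
            (Ideal.mul_mem_mul hc (Ideal.mem_span_singleton_self y))) _
  exact Ideal.mul_mem_left I' c ((Ideal.span_singleton_le_iff_mem I').mp hy')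

theorem annihilator_maximalIdeal_eq_span_of_mem {z ξ : R}
    (hsoc : (maximalIdeal R).annihilator = Ideal.span {z})
    (hξ : ξ ∈ (maximalIdeal R).annihilator) (hξ0 : ξ ≠ 0) :
    (maximalIdeal R).annihilator = Ideal.span {ξ} := by
  have hz : z ∈ (maximalIdeal R).annihilator := hsoc ▸ Ideal.mem_span_singleton_self z
  obtain ⟨c, rfl⟩ := Ideal.mem_span_singleton'.mp (hsoc ▸ hξ)
  have hc : IsUnit c := notMem_maximalIdeal.mp fun hc => hξ0 <| by
    rw [mul_comm]
    exact Submodule.mem_annihilator.mp hz c hc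
  rw [hsoc, Ideal.span_singleton_mul_left_unit hc]

theorem annihilator_annihilator_le_of_covBy [IsNoetherianRing R] {z : R}
    (hsoc : (maximalIdeal R).annihilator = Ideal.span {z}) {I' I : Ideal R} (h : I' ⋖ I)
    (ih : I'.annihilator.annihilator ≤ I') : I.annihilator.annihilator ≤ I := by
  intro b hb
  obtain ⟨a, haI, haI'⟩ := SetLike.exists_of_lt h.lt
  have hI := Ideal.sup_span_singleton_eq_of_covBy h haI haI'
  have hmI : ∀ c ∈ maximalIdeal R, ∀ y ∈ I, c * y ∈ I' :=
    Ideal.mul_le.mp (maximalIdeal_mul_le_of_covBy h)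
  have hsocle : ∀ w ∈ I'.annihilator, w * a ∈ (maximalIdeal R).annihilator :=
    fun w hw => Submodule.mem_annihilator.mpr fun c hc => by
      rw [smul_eq_mul, mul_assoc, mul_comm a]
      exact Submodule.mem_annihilator.mp hw _ (hmI c hc a haI)
  obtain ⟨u, hu, hua⟩ : ∃ u ∈ I'.annihilator, u * a ≠ 0 := by
    by_contra! hzero
    exact haI' (ih (Submodule.mem_annihilator.mpr fun w hw => by
      rw [smul_eq_mul, mul_comm]; exact hzero w hw))
  have hsoc' := annihilator_maximalIdeal_eq_span_of_mem hsoc (hsocle u hu) hua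
  have hub : u * b ∈ (maximalIdeal R).annihilator := Submodule.mem_annihilator.mpr fun c hc => by
    have huc : u * c ∈ I.annihilator := Submodule.mem_annihilator.mpr fun y hy => by
      rw [smul_eq_mul, mul_assoc]
      exact Submodule.mem_annihilator.mp hu _ (hmI c hc y hy)
    rw [smul_eq_mul, mul_right_comm, mul_comm]
    exact Submodule.mem_annihilator.mp hb _ huc
  obtain ⟨r, hr⟩ := Ideal.mem_span_singleton'.mp (hsoc' ▸ hub)
  -- every `w` killing `I'` differs from a multiple of `u` by an element killing all of `I`
  have hbra : b - r * a ∈ I' := ih <| Submodule.mem_annihilator.mpr fun w hw => by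
    obtain ⟨t, ht⟩ := Ideal.mem_span_singleton'.mp (hsoc' ▸ hsocle w hw)
    have hwt : w - t * u ∈ I.annihilator := by
      rw [← hI, Submodule.annihilator_sup]
      refine ⟨Ideal.sub_mem _ hw (Ideal.mul_mem_left _ t hu), ?_⟩
      refine (Submodule.mem_annihilator_span_singleton a _).mpr ?_
      rw [smul_eq_mul]
      linear_combination -ht
    have hwb := Submodule.mem_annihilator.mp hb _ hwt
    rw [smul_eq_mul] at hwb ⊢
    linear_combination hwb - t * hr + r * ht
  rw [← hI, show b = (b - r * a) + r * a by ring]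
  exact add_mem (Submodule.mem_sup_left hbra)
    (Submodule.mem_sup_right (Ideal.mul_mem_left _ r (Ideal.mem_span_singleton_self a)))

theorem annihilator_annihilator_eq [IsArtinianRing R] {z : R}
    (hsoc : (maximalIdeal R).annihilator = Ideal.span {z}) (I : Ideal R) :
    I.annihilator.annihilator = I := by
  refine le_antisymm ?_ I.le_annihilator_annihilator
  induction I using IsArtinian.induction with
  | _ I ih =>
    rcases eq_or_ne I ⊥ with rfl | hI
    · intro b hb
      simpa using Submodule.mem_annihilator.mp hb 1 (by rw [Submodule.annihilator_bot]; trivial)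
    · obtain ⟨I', -, h⟩ := exists_le_covBy_of_lt (bot_lt_iff_ne_bot.mpr hI)
      exact annihilator_annihilator_le_of_covBy hsoc h (ih I' h.lt)

theorem annihilator_mul_annihilator [IsArtinianRing R] {z : R}
    (hsoc : (maximalIdeal R).annihilator = Ideal.span {z}) (I J : Ideal R) :
    (J * I.annihilator).annihilator = I.colon (J : Set R) := by
  rw [Ideal.annihilator_mul, annihilator_annihilator_eq hsoc]

theorem maximalIdeal_pow_succ_lt_pow [IsNoetherianRing R] {k : ℕ}
    (hne : maximalIdeal R ^ (k + 1) ≠ ⊥) :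
    maximalIdeal R ^ (k + 1) < maximalIdeal R ^ k := by
  refine lt_of_le_of_ne (Ideal.pow_le_pow_right k.le_succ) fun h => hne (le_bot_iff.mp ?_)
  rw [h]
  exact le_of_le_sup_maximalIdeal_mul (by rw [bot_sup_eq, ← pow_succ', h])

theorem maximalIdeal_pow_eq_span_singleton_of_colon_eq [IsNoetherianRing R] {k : ℕ} {z : R}
    (hne : maximalIdeal R ^ (k + 1) ≠ ⊥)
    (h : (maximalIdeal R ^ (k + 1)).colon (maximalIdeal R : Set R) =
      Ideal.span {z} ⊔ maximalIdeal R ^ (k + 1)) :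
    maximalIdeal R ^ k = Ideal.span {z} := by
  have hz : ∀ c ∈ maximalIdeal R, z * c ∈ maximalIdeal R ^ (k + 1) := fun c hc => by
    have := h.ge (Submodule.mem_sup_left (Ideal.mem_span_singleton_self z))
    exact Submodule.mem_colon.mp this c hc
  have hle : maximalIdeal R ^ k ≤ Ideal.span {z} := le_of_le_sup_maximalIdeal_mul <|
    calc maximalIdeal R ^ k ≤ (maximalIdeal R ^ (k + 1)).colon (maximalIdeal R : Set R) :=
          fun x hx => Submodule.mem_colon.mpr fun c hc => by
            rw [smul_eq_mul, pow_succ]; exact Ideal.mul_mem_mul hx hc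
      _ = Ideal.span {z} ⊔ maximalIdeal R * maximalIdeal R ^ k := by rw [h, pow_succ']
  obtain ⟨x, hx, hx'⟩ := SetLike.exists_of_lt (maximalIdeal_pow_succ_lt_pow hne)
  obtain ⟨r, rfl⟩ := Ideal.mem_span_singleton'.mp (hle hx)
  have hr : IsUnit r := notMem_maximalIdeal.mp fun hr => hx' (mul_comm r z ▸ hz r hr)
  refine le_antisymm hle ?_
  rw [← Ideal.span_singleton_mul_left_unit hr, Ideal.span_singleton_le_iff_mem]
  exact hx

theorem exists_notMem_span_singleton_sup_sq [IsNoetherianRing R]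
    (h : ¬ (maximalIdeal R).IsPrincipal) {a : R} (ha : a ∈ maximalIdeal R) :
    ∃ b ∈ maximalIdeal R, b ∉ Ideal.span {a} ⊔ maximalIdeal R ^ 2 := by
  by_contra! hb
  refine h ⟨a, le_antisymm (le_of_le_sup_maximalIdeal_mul ?_)
    ((Ideal.span_singleton_le_iff_mem _).mpr ha)⟩
  rw [← pow_two]
  exact hb

theorem mem_maximalIdeal_sq_of_pow_eq_span_singleton {k : ℕ} {x a b : R}
    (hx : maximalIdeal R ^ (k + 1) = Ideal.span {x})
    (hann : (Ideal.span {x}).annihilator ≤ maximalIdeal R ^ 2)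
    (ha : a ∈ maximalIdeal R) (hb : b ∈ maximalIdeal R)
    (hab : b ∉ Ideal.span {a} ⊔ maximalIdeal R ^ 2) : a ∈ maximalIdeal R ^ 2 := by
  have hmem_ann : ∀ {c : R}, c * x = 0 → c ∈ maximalIdeal R ^ 2 := fun hc =>
    hann ((Submodule.mem_annihilator_span_singleton x _).mpr hc)
  have hpow : ∀ {y : R}, y ∈ maximalIdeal R →
      ∀ g ∈ maximalIdeal R ^ k, ∃ p, y * g = p * x :=
    fun {y} hy g hg => by
      have : y * g ∈ maximalIdeal R ^ (k + 1) :=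
        pow_succ' (maximalIdeal R) k ▸ Ideal.mul_mem_mul hy hg
      rw [hx] at this
      obtain ⟨p, hp⟩ := Ideal.mem_span_singleton'.mp this
      exact ⟨p, hp.symm⟩
  have hag : ∀ g ∈ maximalIdeal R ^ k, a * g ∈ maximalIdeal R * Ideal.span {x} := by
    intro g hg
    obtain ⟨p, hp⟩ := hpow ha g hg
    obtain ⟨q, hq⟩ := hpow hb g hg
    have hp_mem : p ∈ maximalIdeal R := by
      by_contra hp_mem
      obtain ⟨v, hv⟩ := (notMem_maximalIdeal.mp hp_mem).exists_left_inv
      have hqp : q * a - p * b ∈ maximalIdeal R ^ 2 :=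
        hmem_ann (by linear_combination b * hp - a * hq)
      refine hab ?_
      rw [show b = v * q * a - v * (q * a - p * b) by linear_combination (-b) * hv]
      exact sub_mem
        (Submodule.mem_sup_left (Ideal.mul_mem_left _ _ (Ideal.mem_span_singleton_self a)))
        (Submodule.mem_sup_right (Ideal.mul_mem_left _ _ hqp))
    exact Ideal.mem_mul_span_singleton.mpr ⟨p, hp_mem, hp.symm⟩
  have hax : a * x ∈ maximalIdeal R ^ 2 * Ideal.span {x} := by
    have key : ∀ w ∈ maximalIdeal R * maximalIdeal R ^ k,
        a * w ∈ maximalIdeal R ^ 2 * Ideal.span {x} := fun w hw => by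
      refine Submodule.mul_induction_on hw (fun c hc g hg => ?_) (fun y y' hy hy' => ?_)
      · rw [mul_left_comm, pow_two, mul_assoc]
        exact Ideal.mul_mem_mul hc (hag g hg)
      · rw [mul_add]; exact add_mem hy hy'
    exact key x (by rw [← pow_succ', hx]; exact Ideal.mem_span_singleton_self x)
  obtain ⟨d, hd, hdx⟩ := Ideal.mem_mul_span_singleton.mp hax
  rw [show a = (a - d) + d by ring]
  exact add_mem (hmem_ann (by linear_combination -hdx)) hd

theorem isPrincipal_maximalIdeal_of_pow_eq_span_singleton [IsNoetherianRing R] {k : ℕ} {x : R}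
    (hx : maximalIdeal R ^ (k + 1) = Ideal.span {x})
    (hann : (Ideal.span {x}).annihilator ≤ maximalIdeal R ^ 2) :
    (maximalIdeal R).IsPrincipal := by
  by_contra h
  have hsq : maximalIdeal R ≤ maximalIdeal R * maximalIdeal R := fun a ha => by
    obtain ⟨b, hb, hab⟩ := exists_notMem_span_singleton_sup_sq h ha
    rw [← pow_two]
    exact mem_maximalIdeal_sq_of_pow_eq_span_singleton hx hann ha hb hab
  have hbot : maximalIdeal R = ⊥ :=
    le_bot_iff.mp (le_of_le_sup_maximalIdeal_mul (by rwa [bot_sup_eq]))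
  exact h ⟨0, by simp [hbot]⟩

end IsLocalRing

theorem not_isPrincipal_of_two_le_mu {I : Ideal R} (h : 2 ≤ mu I) : ¬ I.IsPrincipal := by
  rintro ⟨a, ha⟩
  have : mu I ≤ 1 := Nat.sInf_le ⟨{a}, Finset.card_singleton a, by simp [ha]⟩
  omega

end

theorem stmt3_general {R : Type*} [CommRing R] [IsArtinianRing R] [IsLocalRing R]
    (hGor : ∃ z : R, z ≠ 0 ∧ Submodule.colon (⊥ : Ideal R) ((maximalIdeal R : Ideal R) : Set R) = Ideal.span {z})
    (hedim : 2 ≤ mu (maximalIdeal R))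
    (s : ℕ) (hs : (maximalIdeal R) ^ s ≠ ⊥)
    (i : ℕ) (hi2 : 2 ≤ i) (his : i ≤ s) :
    ¬ ∃ z : R ⧸ (maximalIdeal R) ^ i, z ≠ 0 ∧
        Submodule.colon (⊥ : Ideal (R ⧸ (maximalIdeal R) ^ i))
          (((maximalIdeal R).map (Ideal.Quotient.mk ((maximalIdeal R) ^ i))) : Set (R ⧸ (maximalIdeal R) ^ i))
          = Ideal.span {z} := by
  obtain ⟨z₀, -, hsoc⟩ := hGor
  rintro ⟨z, -, hz⟩
  obtain ⟨z, rfl⟩ := Ideal.Quotient.mk_surjective z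
  obtain ⟨k, rfl⟩ : ∃ k, i = k + 2 := ⟨i - 2, by omega⟩
  rw [Submodule.bot_colon] at hsoc hz
  have hne : maximalIdeal R ^ (k + 2) ≠ ⊥ := fun h =>
    hs (le_bot_iff.mp (h ▸ Ideal.pow_le_pow_right his))
  have hcolon : (maximalIdeal R ^ (k + 2)).colon (maximalIdeal R : Set R) =
      Ideal.span {z} ⊔ maximalIdeal R ^ (k + 2) := by
    rw [← Ideal.comap_annihilator_map_quotientMk, hz, Ideal.comap_quotientMk_span_singleton]
  have hx := maximalIdeal_pow_eq_span_singleton_of_colon_eq hne hcolon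
  have hcolon' : (maximalIdeal R ^ (k + 2)).colon (maximalIdeal R : Set R) =
      maximalIdeal R ^ (k + 1) := by
    rw [hcolon, ← hx, sup_eq_left]
    exact Ideal.pow_le_pow_right (by omega)
  -- duality turns `(m^(k+2) : m) = m^(k+1)` into `(0 : m^(k+1)) = m (0 : m^(k+2))`
  have hann : (Ideal.span {z}).annihilator ≤ maximalIdeal R ^ 2 := by
    rw [← hx, ← hcolon', ← annihilator_mul_annihilator hsoc, annihilator_annihilator_eq hsoc,
      pow_two]
    exact Ideal.mul_mono_right (le_maximalIdeal
      (mt Submodule.annihilator_eq_top_iff.mp hne))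
  exact not_isPrincipal_of_two_le_mu hedim
    (isPrincipal_maximalIdeal_of_pow_eq_span_singleton hx hann)

/-- Let `(R, m, k)` be an Artinian Gorenstein local ring (socle `(0 :_R m)` is a
one-dimensional `k`-vector space, i.e. generated by a single nonzero element annihilated by `m`)
of embedding dimension at least 2 and Loewy length `s`.  Then for every `2 ≤ i ≤ s` the quotient
ring `R/m^i` is not Gorenstein. -/
theorem stmt3 {R : Type*} [CommRing R] [IsArtinianRing R] [IsLocalRing R]
    (hGor : ∃ z : R, z ≠ 0 ∧ Submodule.colon (⊥ : Ideal R) ((maximalIdeal R : Ideal R) : Set R) = Ideal.span {z})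
    (hedim : 2 ≤ mu (maximalIdeal R))
    (s : ℕ) (hs : (maximalIdeal R) ^ s ≠ ⊥) (hs1 : (maximalIdeal R) ^ (s + 1) = ⊥)
    (i : ℕ) (hi2 : 2 ≤ i) (his : i ≤ s) :
    ¬ ∃ z : R ⧸ (maximalIdeal R) ^ i, z ≠ 0 ∧
        Submodule.colon (⊥ : Ideal (R ⧸ (maximalIdeal R) ^ i))
          (((maximalIdeal R).map (Ideal.Quotient.mk ((maximalIdeal R) ^ i))) : Set (R ⧸ (maximalIdeal R) ^ i))
          = Ideal.span {z} :=
  stmt3_general hGor hedim s hs i hi2 his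
end

section
/- Let (R, m, k) be an Artinian Gorenstein local ring with m^2 = x·m for some x ∈ m, with µ(m^2) = m ≥ 2. Then m·((0 :_R x) ∩ m^2) equals the socle (0 :_R m) of R; in particular (0 :_R x) ∩ m^2 is not contained in the socle. -/
open IsLocalRing

/-!
Multiplication by `x` maps `m^k` onto `m^(k+1)` for `k ≥ 1`, with kernel `(0 :_R x) ∩ m^k`.
The socle `(z)` lies in every nonzero ideal. So if `(0 :_R x) ∩ m^2` were inside the socle, each
kernel with `k ≥ 2` would lie in `m^(k+1)` as long as `m^(k+1) ≠ 0`, and a generator of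
`m^(k+1)/m^(k+2)` would pull back along `x` to a generator of `m^k/m^(k+1)`. Descending from the
nilpotency index, `m^2/m^3` is cyclic, and by Nakayama `m^2` is principal, contradicting
`µ(m^2) ≥ 2`. Hence `m((0 :_R x) ∩ m^2)` is nonzero; since `m·m = x·m` it is killed by `m`,
so it is the whole (simple) socle.
-/

namespace Ideal

variable {R : Type*} [CommRing R]

theorem le_bot_colon_iff {I J : Ideal R} :
    I ≤ (⊥ : Ideal R).colon (J : Set R) ↔ I * J = ⊥ := by
  rw [Submodule.bot_colon, Submodule.le_annihilator_iff, smul_eq_mul]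

theorem pow_succ_eq_span_singleton_mul_pow {I : Ideal R} {x : R} (h : I ^ 2 = span {x} * I)
    {k : ℕ} (hk : 1 ≤ k) : I ^ (k + 1) = span {x} * I ^ k := by
  induction k, hk using Nat.le_induction with
  | base => simpa using h
  | succ k _ ih => conv_lhs => rw [pow_succ, ih, mul_assoc, ← pow_succ]

theorem mul_bot_colon_le_bot_colon_of_sq_eq {I : Ideal R} {x : R} (h : I ^ 2 = span {x} * I) :
    I * (⊥ : Ideal R).colon (span {x} : Set R) ≤ (⊥ : Ideal R).colon (I : Set R) := by
  have hx : (⊥ : Ideal R).colon (span {x} : Set R) * span {x} = ⊥ :=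
    le_bot_colon_iff.mp le_rfl
  rw [le_bot_colon_iff, mul_right_comm, ← sq, h, mul_right_comm, mul_comm (span {x}), hx,
    bot_mul]

theorem exists_ne_zero_mem_bot_colon_of_isNilpotent {M I : Ideal R} (hM : IsNilpotent M)
    (hI : I ≠ ⊥) : ∃ b ∈ I, b ≠ 0 ∧ b ∈ (⊥ : Ideal R).colon (M : Set R) := by
  classical
  obtain ⟨n, hn⟩ := hM
  have hex : ∃ t, I * M ^ (t + 1) = ⊥ := ⟨n, by rw [pow_succ, hn]; simp⟩
  have hne : I * M ^ Nat.find hex ≠ ⊥ := by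
    rcases hfind : Nat.find hex with _ | s
    · rwa [pow_zero, mul_one]
    · exact Nat.find_min hex (by omega)
  have hkill : I * M ^ Nat.find hex ≤ (⊥ : Ideal R).colon (M : Set R) := by
    rw [le_bot_colon_iff, mul_assoc, ← pow_succ]
    exact Nat.find_spec hex
  obtain ⟨b, hb, hb0⟩ := Submodule.exists_mem_ne_zero_of_ne_bot hne
  have hbI : b ∈ I := mul_le_left hb
  exact ⟨b, hbI, hb0, hkill hb⟩

theorem exists_pow_le_span_singleton_sup_pow_succ {I : Ideal R} {x : R}
    (h : I ^ 2 = span {x} * I) {k : ℕ} (hk : 1 ≤ k)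
    (hker : (⊥ : Ideal R).colon (span {x} : Set R) ⊓ I ^ k ≤ I ^ (k + 1))
    (hsucc : ∃ v ∈ I ^ (k + 1), I ^ (k + 1) ≤ span {v} ⊔ I ^ (k + 1 + 1)) :
    ∃ w ∈ I ^ k, I ^ k ≤ span {w} ⊔ I ^ (k + 1) := by
  have hpow : ∀ {j}, 1 ≤ j → I ^ (j + 1) = span {x} * I ^ j :=
    pow_succ_eq_span_singleton_mul_pow h
  obtain ⟨v, hv, hvgen⟩ := hsucc
  obtain ⟨w, hw, rfl⟩ := mem_span_singleton_mul.mp (hpow hk ▸ hv)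
  refine ⟨w, hw, fun a ha => ?_⟩
  have hxa : x * a ∈ I ^ (k + 1) := hpow hk ▸ mul_mem_mul (mem_span_singleton_self x) ha
  obtain ⟨p, hp, q, hq, hpq⟩ := Submodule.mem_sup.mp (hvgen hxa)
  obtain ⟨r, rfl⟩ := mem_span_singleton'.mp hp
  obtain ⟨c, hc, rfl⟩ := mem_span_singleton_mul.mp (hpow (j := k + 1) (by omega) ▸ hq)
  have hd : a - r * w - c ∈ I ^ (k + 1) := by
    have hck : c ∈ I ^ k := pow_le_pow_right (by omega) hc
    refine hker ⟨?_, sub_mem (sub_mem ha (mul_mem_left _ _ hw)) hck⟩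
    rw [SetLike.mem_coe, mem_colon_span_singleton, Submodule.mem_bot]
    linear_combination -hpq
  rw [show a = r * w + (a - r * w - c + c) by ring]
  exact add_mem (Submodule.mem_sup_left (mem_span_singleton'.mpr ⟨r, rfl⟩))
    (Submodule.mem_sup_right (add_mem hd hc))

end Ideal

theorem mu_le_one_of_eq_span_singleton {R : Type*} [CommRing R] {I : Ideal R} {w : R}
    (h : I = Ideal.span {w}) : mu I ≤ 1 :=
  Nat.sInf_le ⟨{w}, Finset.card_singleton w, by simpa using h.symm⟩

namespace IsLocalRing

variable {R : Type*} [CommRing R] [IsLocalRing R] [IsArtinianRing R] {x z : R}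

local notation "𝔪" => maximalIdeal R

theorem isNilpotent_maximalIdeal : IsNilpotent (𝔪) := by
  rw [← jacobson_eq_maximalIdeal ⊥ bot_ne_top]
  exact IsArtinianRing.isNilpotent_jacobson_bot

theorem mem_of_bot_colon_maximalIdeal_eq_span_singleton
    (hsoc : (⊥ : Ideal R).colon (𝔪 : Set R) = Ideal.span {z}) {I : Ideal R}
    (hI : I ≠ ⊥) : z ∈ I := by
  obtain ⟨b, hbI, hb0, hbsoc⟩ :=
    Ideal.exists_ne_zero_mem_bot_colon_of_isNilpotent isNilpotent_maximalIdeal hI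
  rw [hsoc] at hbsoc
  obtain ⟨c, rfl⟩ := Ideal.mem_span_singleton'.mp hbsoc
  have hc : IsUnit c := by
    by_contra hc
    have hz : z ∈ (⊥ : Ideal R).colon (𝔪 : Set R) := hsoc ▸ Ideal.mem_span_singleton_self _
    exact hb0 (by simpa [mul_comm] using Submodule.mem_colon.mp hz c hc)
  obtain ⟨u, rfl⟩ := hc
  simpa using Ideal.mul_mem_left I (↑u⁻¹ : R) hbI

theorem exists_pow_le_span_singleton_sup_of_pow_succ_eq_bot
    (hsoc : (⊥ : Ideal R).colon (𝔪 : Set R) = Ideal.span {z}) {k : ℕ}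
    (hk : 𝔪 ^ (k + 1) = ⊥) :
    ∃ w ∈ 𝔪 ^ k, 𝔪 ^ k ≤ Ideal.span {w} ⊔ 𝔪 ^ (k + 1) := by
  by_cases h0 : 𝔪 ^ k = ⊥
  · exact ⟨0, by simp [h0]⟩
  refine ⟨z, mem_of_bot_colon_maximalIdeal_eq_span_singleton hsoc h0, le_sup_of_le_left ?_⟩
  rw [← hsoc, Ideal.le_bot_colon_iff, ← pow_succ, hk]

theorem exists_sq_le_span_singleton_sup_pow_three
    (hsoc : (⊥ : Ideal R).colon (𝔪 : Set R) = Ideal.span {z})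
    (hxm : 𝔪 ^ 2 = Ideal.span {x} * 𝔪)
    (hJ : (⊥ : Ideal R).colon (Ideal.span {x} : Set R) ⊓ 𝔪 ^ 2 ≤
      (⊥ : Ideal R).colon (𝔪 : Set R)) :
    ∃ w ∈ 𝔪 ^ 2, 𝔪 ^ 2 ≤ Ideal.span {w} ⊔ 𝔪 ^ 3 := by
  obtain ⟨n, hn⟩ := isNilpotent_maximalIdeal (R := R)
  have hvanish : 𝔪 ^ (n + 2 + 1) = ⊥ := by
    rw [add_assoc, pow_add, hn, zero_mul, Ideal.zero_eq_bot]
  refine Nat.decreasingInduction'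
    (P := fun k => ∃ w ∈ 𝔪 ^ k, 𝔪 ^ k ≤ Ideal.span {w} ⊔ 𝔪 ^ (k + 1))
    (fun k _ hk hsucc => ?_) (by omega : 2 ≤ n + 2)
    (exists_pow_le_span_singleton_sup_of_pow_succ_eq_bot hsoc hvanish)
  by_cases hk1 : 𝔪 ^ (k + 1) = ⊥
  · exact exists_pow_le_span_singleton_sup_of_pow_succ_eq_bot hsoc hk1
  refine Ideal.exists_pow_le_span_singleton_sup_pow_succ hxm (by omega) ?_ hsucc
  calc (⊥ : Ideal R).colon (Ideal.span {x} : Set R) ⊓ 𝔪 ^ k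
      ≤ (⊥ : Ideal R).colon (Ideal.span {x} : Set R) ⊓ 𝔪 ^ 2 :=
        inf_le_inf_left _ (Ideal.pow_le_pow_right hk)
    _ ≤ Ideal.span {z} := hsoc ▸ hJ
    _ ≤ 𝔪 ^ (k + 1) :=
        (Ideal.span_singleton_le_iff_mem _).mpr
          (mem_of_bot_colon_maximalIdeal_eq_span_singleton hsoc hk1)

theorem mu_sq_le_one_of_bot_colon_inf_sq_le
    (hsoc : (⊥ : Ideal R).colon (𝔪 : Set R) = Ideal.span {z})
    (hxm : 𝔪 ^ 2 = Ideal.span {x} * 𝔪)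
    (hJ : (⊥ : Ideal R).colon (Ideal.span {x} : Set R) ⊓ 𝔪 ^ 2 ≤
      (⊥ : Ideal R).colon (𝔪 : Set R)) :
    mu (𝔪 ^ 2) ≤ 1 := by
  obtain ⟨w, hw, hgen⟩ := exists_sq_le_span_singleton_sup_pow_three hsoc hxm hJ
  refine mu_le_one_of_eq_span_singleton
    (le_antisymm ?_ ((Ideal.span_singleton_le_iff_mem _).mpr hw))
  rw [show 𝔪 ^ 3 = 𝔪 • 𝔪 ^ 2 from pow_succ' _ _] at hgen
  exact Submodule.le_of_le_smul_of_le_jacobson_bot (IsNoetherian.noetherian _)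
    (maximalIdeal_le_jacobson ⊥) hgen

end IsLocalRing

theorem stmt5_general {R : Type*} [CommRing R] [IsArtinianRing R] [IsLocalRing R]
    (hGor : ∃ z : R, z ≠ 0 ∧ Submodule.colon ⊥ ((maximalIdeal R : Ideal R) : Set R) = Ideal.span {z})
    (x : R)
    (hxm : (maximalIdeal R) ^ 2 = Ideal.span {x} * maximalIdeal R)
    (m : ℕ) (hm : mu ((maximalIdeal R) ^ 2) = m) (hm2 : 2 ≤ m) :
    maximalIdeal R * (Submodule.colon ⊥ ((Ideal.span {x} : Ideal R) : Set R) ⊓ (maximalIdeal R) ^ 2)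
        = Submodule.colon ⊥ ((maximalIdeal R : Ideal R) : Set R) ∧
    ¬ (Submodule.colon ⊥ ((Ideal.span {x} : Ideal R) : Set R) ⊓ (maximalIdeal R) ^ 2
        ≤ Submodule.colon ⊥ ((maximalIdeal R : Ideal R) : Set R)) := by
  obtain ⟨z, -, hsoc⟩ := hGor
  have hJ : ¬ (⊥ : Ideal R).colon (Ideal.span {x} : Set R) ⊓ maximalIdeal R ^ 2 ≤
      (⊥ : Ideal R).colon (maximalIdeal R : Set R) := fun hJ => by
    have := mu_sq_le_one_of_bot_colon_inf_sq_le hsoc hxm hJ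
    omega
  refine ⟨le_antisymm ?_ ?_, hJ⟩
  · exact (Ideal.mul_mono_right inf_le_left).trans
      (Ideal.mul_bot_colon_le_bot_colon_of_sq_eq hxm)
  · rw [hsoc, Ideal.span_singleton_le_iff_mem]
    refine mem_of_bot_colon_maximalIdeal_eq_span_singleton hsoc fun hbot => hJ ?_
    rw [Ideal.le_bot_colon_iff, mul_comm, hbot]

/-- Let `(R, m, k)` be an Artinian Gorenstein local ring with `m^2 = x·m` for some
`x ∈ m` and `µ(m^2) = m ≥ 2`.  Then `m·((0 :_R x) ∩ m^2)` equals the socle `(0 :_R m)` of `R`;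
in particular `(0 :_R x) ∩ m^2` is not contained in the socle. -/
theorem stmt5 {R : Type*} [CommRing R] [IsArtinianRing R] [IsLocalRing R]
    (hGor : ∃ z : R, z ≠ 0 ∧ Submodule.colon ⊥ ((maximalIdeal R : Ideal R) : Set R) = Ideal.span {z})
    (x : R) (hx : x ∈ maximalIdeal R)
    (hxm : (maximalIdeal R) ^ 2 = Ideal.span {x} * maximalIdeal R)
    (m : ℕ) (hm : mu ((maximalIdeal R) ^ 2) = m) (hm2 : 2 ≤ m) :
    maximalIdeal R * (Submodule.colon ⊥ ((Ideal.span {x} : Ideal R) : Set R) ⊓ (maximalIdeal R) ^ 2)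
        = Submodule.colon ⊥ ((maximalIdeal R : Ideal R) : Set R) ∧
    ¬ (Submodule.colon ⊥ ((Ideal.span {x} : Ideal R) : Set R) ⊓ (maximalIdeal R) ^ 2
        ≤ Submodule.colon ⊥ ((maximalIdeal R : Ideal R) : Set R)) :=
  stmt5_general hGor x hxm m hm hm2
end

section
/- Let (R, m) be a Noetherian local ring with m^2 = x·m for some x ∈ m. If for some t ≥ 2 one has µ(m^t) > µ(m^{t+1}), then there exists y ∈ m^t \ m^{t+1} and z ∈ m^{t+1} such that x·(y − z) = 0 and y − z ∈ (0 :_R x) ∩ m^2 with y − z ∉ m^{t+1}. -/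
open IsLocalRing

/-!
Multiplication by `x` maps `m^t` onto `m^{t+1} = x m^t`. If every `y ∈ m^t` with `x y = 0` lay in
`m^{t+1}`, then lifting a minimal generating set of `x m^t` back along `x` would give, modulo
`m · m^t`, a generating set of `m^t`, and Nakayama's lemma would force
`µ(m^t) ≤ µ(m^{t+1})`. Hence some `y ∈ m^t \ m^{t+1}` is killed by `x`, and `z = 0` works.
-/

theorem mu_eq_spanFinrank {R : Type*} [CommRing R] (I : Ideal R) : mu I = I.spanFinrank := by
  simp [mu, Submodule.spanFinrank_eq_iInf, iInf, Set.range, and_comm]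

theorem pow_add_two_eq_mul_pow_succ {M : Type*} [CommMonoid M] {a b : M} (h : a ^ 2 = b * a)
    (n : ℕ) : a ^ (n + 2) = b * a ^ (n + 1) :=
  calc a ^ (n + 2) = a ^ n * a ^ 2 := pow_add a n 2
    _ = b * a ^ (n + 1) := by rw [h, pow_succ, mul_left_comm]

theorem Ideal.spanFinrank_le_spanFinrank_span_singleton_mul {R : Type*} [CommRing R]
    {I J : Ideal R} (hI : I.FG) (hJ : J ≤ Ideal.jacobson ⊥) {x : R}
    (h : ∀ y ∈ I, x * y = 0 → y ∈ J * I) :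
    I.spanFinrank ≤ (Ideal.span {x} * I).spanFinrank := by
  classical
  obtain ⟨s, hs_card, hs_span⟩ :=
    ((Submodule.fg_span_singleton x).mul hI).exists_span_finset_card_eq_spanFinrank
  have hs : ∀ g ∈ s, ∃ a ∈ I, x * a = g := fun g hg ↦
    Ideal.mem_span_singleton_mul.mp (hs_span ▸ Ideal.subset_span hg)
  choose! a haI hax using hs
  set T := s.image a
  have hT_le : Ideal.span (T : Set R) ≤ I := by
    rw [Ideal.span_le]
    simpa [T, Set.subset_def] using haI
  have hx_span : Ideal.span {x} * I ≤ Ideal.span {x} * Ideal.span (T : Set R) := by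
    rw [← hs_span, Ideal.span_le]
    intro g hg
    rw [← hax g hg]
    exact Ideal.mul_mem_mul (Ideal.mem_span_singleton_self x)
      (Ideal.subset_span (Finset.mem_image_of_mem a hg))
  have hT_span : Ideal.span (T : Set R) = I := by
    refine le_antisymm hT_le (Submodule.le_of_le_smul_of_le_jacobson_bot hI hJ fun b hb ↦ ?_)
    obtain ⟨c, hcT, hxc⟩ := Ideal.mem_span_singleton_mul.mp
      (hx_span (Ideal.mul_mem_mul (Ideal.mem_span_singleton_self x) hb))
    have hbc : b - c ∈ J * I := h _ (sub_mem hb (hT_le hcT)) (by rw [mul_sub, hxc, sub_self])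
    rw [← add_sub_cancel c b]
    exact Submodule.add_mem_sup hcT hbc
  calc I.spanFinrank ≤ T.card := by
        rw [← hT_span]
        simpa using Submodule.spanFinrank_span_le_ncard_of_finite T.finite_toSet
    _ ≤ s.card := Finset.card_image_le
    _ = (Ideal.span {x} * I).spanFinrank := hs_card

theorem stmt7_general {R : Type*} [CommRing R] [IsNoetherianRing R] [IsLocalRing R]
    (x : R)
    (hxm : (maximalIdeal R) ^ 2 = Ideal.span {x} * maximalIdeal R)
    (t : ℕ) (ht : 2 ≤ t)
    (hmu : mu ((maximalIdeal R) ^ (t + 1)) < mu ((maximalIdeal R) ^ t)) :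
    ∃ y ∈ (maximalIdeal R) ^ t, y ∉ (maximalIdeal R) ^ (t + 1) ∧
      ∃ z ∈ (maximalIdeal R) ^ (t + 1),
        x * (y - z) = 0 ∧
        y - z ∈ Submodule.colon ⊥ ((Ideal.span {x} : Ideal R) : Set R) ⊓ (maximalIdeal R) ^ 2 ∧
        y - z ∉ (maximalIdeal R) ^ (t + 1) := by
  set m := maximalIdeal R
  obtain ⟨y, hy, hxy, hy'⟩ : ∃ y ∈ m ^ t, x * y = 0 ∧ y ∉ m ^ (t + 1) := by
    by_contra! h
    have hle := Ideal.spanFinrank_le_spanFinrank_span_singleton_mul (IsNoetherian.noetherian _)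
      (maximalIdeal_le_jacobson ⊥) fun y hy hxy ↦ pow_succ' m t ▸ h y hy hxy
    have hxt : m ^ (t + 1) = Ideal.span {x} * m ^ t := by
      obtain ⟨k, rfl⟩ := Nat.exists_eq_add_of_le' (by omega : 1 ≤ t)
      exact pow_add_two_eq_mul_pow_succ hxm k
    rw [← hxt] at hle
    rw [mu_eq_spanFinrank, mu_eq_spanFinrank] at hmu
    omega
  refine ⟨y, hy, hy', 0, zero_mem _, by simpa using hxy, ⟨?_, ?_⟩, by simpa using hy'⟩
  · rw [sub_zero, SetLike.mem_coe, Ideal.mem_colon_span_singleton, Ideal.mem_bot, mul_comm, hxy]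
  · exact Ideal.pow_le_pow_right ht (by simpa using hy)

/-- Let `(R, m)` be a Noetherian local ring with `m^2 = x·m` for some `x ∈ m`.
If for some `t ≥ 2` one has `µ(m^t) > µ(m^{t+1})`, then there exist `y ∈ m^t \ m^{t+1}` and
`z ∈ m^{t+1}` such that `x·(y − z) = 0`, `y − z ∈ (0 :_R x) ∩ m^2` and `y − z ∉ m^{t+1}`. -/
theorem stmt7 {R : Type*} [CommRing R] [IsNoetherianRing R] [IsLocalRing R]
    (x : R) (hx : x ∈ maximalIdeal R)
    (hxm : (maximalIdeal R) ^ 2 = Ideal.span {x} * maximalIdeal R)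
    (t : ℕ) (ht : 2 ≤ t)
    (hmu : mu ((maximalIdeal R) ^ (t + 1)) < mu ((maximalIdeal R) ^ t)) :
    ∃ y ∈ (maximalIdeal R) ^ t, y ∉ (maximalIdeal R) ^ (t + 1) ∧
      ∃ z ∈ (maximalIdeal R) ^ (t + 1),
        x * (y - z) = 0 ∧
        y - z ∈ Submodule.colon ⊥ ((Ideal.span {x} : Ideal R) : Set R) ⊓ (maximalIdeal R) ^ 2 ∧
        y - z ∉ (maximalIdeal R) ^ (t + 1) :=
  stmt7_general x hxm t ht hmu
end

section
/- Let (R, m, k) be a stretched Artinian local ring (i.e. µ(m^2) ≤ 1) with an element x_1 ∈ soc(R) \ m^2, where m = (x_1, x_2, ..., x_n) is a minimal generating set. Then (x_1) ∩ (x_2, ..., x_n) = 0 and R ≅ R/(x_1) ×_k R/(x_2, ..., x_n) as a fibre product over the residue field. -/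
open IsLocalRing

/- Proof idea: write `x₀ := x 0` and `J := (x 1, …, x (n-1))`. Minimality of the generating
set gives `x₀ ∉ J`. For `r x₀ ∈ J`, either `r` is a unit, which would put `x₀` in `J`, or
`r ∈ m`, and then `r x₀ = 0` because `x₀` lies in the socle; so `(x₀) ∩ J = 0`. Since moreover
`(x₀) + J = m`, a pair in `R/(x₀) × R/J` whose components agree in `R/m` lifts to `R`, so `R`
is the fibre product. -/

theorem mu_le_card_of_span_eq {R : Type*} [CommRing R] {I : Ideal R} (s : Finset R)
    (hs : Ideal.span (s : Set R) = I) : mu I ≤ s.card :=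
  Nat.sInf_le ⟨s, rfl, hs⟩

theorem notMem_span_image_ne_of_mu_eq {R : Type*} [CommRing R] {M : Ideal R} {n : ℕ}
    {x : Fin n → R} (hspan : Ideal.span (Set.range x) = M) (hmin : mu M = n) (i : Fin n) :
    x i ∉ Ideal.span (x '' {j | j ≠ i}) := by
  classical
  intro hi
  have hM : Ideal.span (x '' {j | j ≠ i}) = M := by
    rw [← hspan, ← Set.insert_image_compl_eq_range x i, Ideal.span_insert, Set.compl_singleton_eq,
      sup_eq_right.mpr ((Ideal.span_singleton_le_iff_mem _).mpr hi)]
  have hle : mu M ≤ (({i}ᶜ : Finset (Fin n)).image x).card :=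
    mu_le_card_of_span_eq _ (by rwa [Finset.coe_image, Finset.coe_compl, Finset.coe_singleton,
      Set.compl_singleton_eq])
  have hcard : (({i}ᶜ : Finset (Fin n)).image x).card < n :=
    Finset.card_image_le.trans_lt (by
      rw [Finset.card_compl, Finset.card_singleton, Fintype.card_fin]
      exact Nat.sub_lt i.pos one_pos)
  omega

theorem span_singleton_inf_eq_bot_of_mem_socle {R : Type*} [CommRing R] [IsLocalRing R]
    {a : R} {J : Ideal R} (ha : ∀ r ∈ maximalIdeal R, r * a = 0) (haJ : a ∉ J) :
    Ideal.span {a} ⊓ J = ⊥ := by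
  refine le_bot_iff.mp fun b ⟨hbI, hbJ⟩ => ?_
  obtain ⟨r, rfl⟩ := Ideal.mem_span_singleton'.mp hbI
  by_cases hr : r ∈ maximalIdeal R
  · exact ha r hr
  · obtain ⟨u, rfl⟩ := (IsLocalRing.notMem_maximalIdeal).mp hr
    refine absurd ?_ haJ
    simpa using J.mul_mem_left (↑u⁻¹ : R) hbJ

theorem Ideal.injective_quotient_prod_of_inf_eq_bot {R : Type*} [CommRing R] {I J : Ideal R}
    (h : I ⊓ J = ⊥) : Function.Injective ((Ideal.Quotient.mk I).prod (Ideal.Quotient.mk J)) := by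
  refine (injective_iff_map_eq_zero _).mpr fun a ha => ?_
  have hmem : a ∈ I ⊓ J :=
    ⟨Ideal.Quotient.eq_zero_iff_mem.mp (congrArg Prod.fst ha),
      Ideal.Quotient.eq_zero_iff_mem.mp (congrArg Prod.snd ha)⟩
  rwa [h, Ideal.mem_bot] at hmem

theorem Ideal.range_quotient_prod_of_sup_eq {R : Type*} [CommRing R] {I J K : Ideal R}
    (hsup : I ⊔ J = K) (hI : I ≤ K) (hJ : J ≤ K) :
    Set.range ((Ideal.Quotient.mk I).prod (Ideal.Quotient.mk J)) =
      {p | Ideal.Quotient.factor hI p.1 = Ideal.Quotient.factor hJ p.2} := by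
  ext ⟨p, q⟩
  constructor
  · rintro ⟨r, hr⟩
    cases hr
    simp only [Set.mem_ofPred_eq, Ideal.Quotient.factor_mk]
  · intro hpq
    obtain ⟨a, rfl⟩ := Ideal.Quotient.mk_surjective p
    obtain ⟨b, rfl⟩ := Ideal.Quotient.mk_surjective q
    simp only [Set.mem_ofPred_eq, Ideal.Quotient.factor_mk, Ideal.Quotient.mk_eq_mk_iff_sub_mem,
      ← hsup] at hpq
    obtain ⟨u, hu, v, hv, huv⟩ := Submodule.mem_sup.mp hpq
    refine ⟨a - u, Prod.ext ?_ ?_⟩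
    · simpa [Ideal.Quotient.mk_eq_mk_iff_sub_mem, Ideal.Quotient.eq_zero_iff_mem] using hu
    · rw [RingHom.prod_apply, Ideal.Quotient.mk_eq_mk_iff_sub_mem]
      convert hv using 1
      linear_combination -huv

/-- Let `(R, m, k)` be a stretched Artinian local ring (`µ(m^2) ≤ 1`) with a
minimal generating set `x 0, …, x (n-1)` of `m` such that `x 0 ∈ soc(R) \ m^2`.  Then
`(x 0) ∩ (x 1, …, x (n-1)) = 0` and `R ≅ R/(x 0) ×_k R/(x 1, …, x (n-1))`: the natural map
`R → R/(x 0) × R/(x 1, …, x (n-1))` is injective with range the fibre product over the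
residue field `k = R/m`. -/
theorem stmt9 {R : Type*} [CommRing R] [IsLocalRing R]
    (n : ℕ) (hn0 : 0 < n) (x : Fin n → R)
    (hspan : Ideal.span (Set.range x) = maximalIdeal R)
    (hmin : mu (maximalIdeal R) = n)
    (hx0soc : x ⟨0, hn0⟩ ∈ Submodule.colon ⊥ ((maximalIdeal R : Ideal R) : Set R)) :
    Ideal.span {x ⟨0, hn0⟩} ⊓ Ideal.span (x '' {i : Fin n | i ≠ ⟨0, hn0⟩}) = ⊥ ∧
    Function.Injective ((Ideal.Quotient.mk (Ideal.span {x ⟨0, hn0⟩})).prod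
      (Ideal.Quotient.mk (Ideal.span (x '' {i : Fin n | i ≠ ⟨0, hn0⟩})))) ∧
    Set.range ((Ideal.Quotient.mk (Ideal.span {x ⟨0, hn0⟩})).prod
      (Ideal.Quotient.mk (Ideal.span (x '' {i : Fin n | i ≠ ⟨0, hn0⟩})))) =
      {p : (R ⧸ Ideal.span {x ⟨0, hn0⟩}) ×
            (R ⧸ Ideal.span (x '' {i : Fin n | i ≠ ⟨0, hn0⟩})) |
        Ideal.Quotient.factor (S := _) (T := maximalIdeal R)
            (by rw [← hspan]; exact Ideal.span_mono (by
              rintro _ rfl; exact Set.mem_range_self _)) p.1 =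
          Ideal.Quotient.factor (S := _) (T := maximalIdeal R)
            (by rw [← hspan]; exact Ideal.span_mono (by
              rintro _ ⟨i, _, rfl⟩; exact Set.mem_range_self i)) p.2} := by
  have hsoc : ∀ r ∈ maximalIdeal R, r * x ⟨0, hn0⟩ = 0 := fun r hr => by
    simpa [mul_comm] using Submodule.mem_colon.mp hx0soc r hr
  have hinf := span_singleton_inf_eq_bot_of_mem_socle hsoc
    (notMem_span_image_ne_of_mu_eq hspan hmin ⟨0, hn0⟩)
  have hsup : Ideal.span {x ⟨0, hn0⟩} ⊔ Ideal.span (x '' {i : Fin n | i ≠ ⟨0, hn0⟩}) =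
      maximalIdeal R := by
    rw [← Ideal.span_insert, ← Set.compl_singleton_eq, Set.insert_image_compl_eq_range, hspan]
  exact ⟨hinf, Ideal.injective_quotient_prod_of_inf_eq_bot hinf,
    Ideal.range_quotient_prod_of_sup_eq hsup _ _⟩
end
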